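/- arXiv:1210.1389 — 4 statements merged into one kernel-verified Lean document; each statement's English description precedes it below -/
import Mathlib

section
/- For every complex z and every real x ∉ {0}, with f(z,x) := sinh(z)/(cosh(z) - 1 + x) (defined where the denominator is nonzero), f satisfies the partial differential equation ∂²f/∂z² = (x-1)·∂f/∂x + x(x-2)·∂²f/∂x². -/
open Complex Filter

set_option maxHeartbeats 1000000 in
theorem sinh_cosh_pde (z : ℂ) (x : ℝ) (hx : x ≠ 0)
    (hden : Complex.cosh z - 1 + (x : ℂ) ≠ 0) :
    deriv (deriv (fun w : ℂ => Complex.sinh w / (Complex.cosh w - 1 + (x : ℂ)))) z =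
      ((x : ℂ) - 1) *
          deriv (fun y : ℝ => Complex.sinh z / (Complex.cosh z - 1 + (y : ℂ))) x +
        (x : ℂ) * ((x : ℂ) - 2) *
          deriv (deriv (fun y : ℝ => Complex.sinh z / (Complex.cosh z - 1 + (y : ℂ)))) x := by
  have hc := Complex.hasDerivAt_cosh
  have hs := Complex.hasDerivAt_sinh
  -- z direction
  have hUopen : IsOpen {w : ℂ | Complex.cosh w - 1 + (x:ℂ) ≠ 0} := by
    have hcont : Continuous fun w : ℂ => Complex.cosh w - 1 + (x:ℂ) := by continuity
    exact hcont.isOpen_preimage _ isOpen_ne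
  have hF' : ∀ w : ℂ, Complex.cosh w - 1 + (x:ℂ) ≠ 0 →
      HasDerivAt (fun w : ℂ => Complex.sinh w / (Complex.cosh w - 1 + (x : ℂ)))
        ((Complex.cosh w * (Complex.cosh w - 1 + (x:ℂ)) - Complex.sinh w * Complex.sinh w) /
          (Complex.cosh w - 1 + (x:ℂ))^2) w := fun w hw =>
    (hs w).div (((hc w).sub_const 1).add_const (x:ℂ)) hw
  have hev : deriv (fun w : ℂ => Complex.sinh w / (Complex.cosh w - 1 + (x : ℂ))) =ᶠ[nhds z]
      (fun w => (Complex.cosh w * (Complex.cosh w - 1 + (x:ℂ)) - Complex.sinh w * Complex.sinh w) /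
          (Complex.cosh w - 1 + (x:ℂ))^2) := by
    filter_upwards [hUopen.mem_nhds hden] with w hw using (hF' w hw).deriv
  have hF'' : HasDerivAt (fun w => (Complex.cosh w * (Complex.cosh w - 1 + (x:ℂ)) -
        Complex.sinh w * Complex.sinh w) / (Complex.cosh w - 1 + (x:ℂ))^2)
      (((Complex.sinh z * (Complex.cosh z - 1 + (x:ℂ)) + Complex.cosh z * Complex.sinh z -
        (Complex.cosh z * Complex.sinh z + Complex.sinh z * Complex.cosh z)) *
        (Complex.cosh z - 1 + (x:ℂ))^2 -
        (Complex.cosh z * (Complex.cosh z - 1 + (x:ℂ)) - Complex.sinh z * Complex.sinh z) *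
          ((2:ℂ) * (Complex.cosh z - 1 + (x:ℂ))^1 * Complex.sinh z)) /
        ((Complex.cosh z - 1 + (x:ℂ))^2)^2) z :=
    HasDerivAt.div
      (((hc z).mul (((hc z).sub_const 1).add_const (x:ℂ))).sub ((hs z).mul (hs z)))
      ((((hc z).sub_const 1).add_const (x:ℂ)).pow 2) (pow_ne_zero 2 hden)
  have hLHS : deriv (deriv (fun w : ℂ => Complex.sinh w / (Complex.cosh w - 1 + (x : ℂ)))) z =
      ((Complex.sinh z * (Complex.cosh z - 1 + (x:ℂ)) + Complex.cosh z * Complex.sinh z -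
        (Complex.cosh z * Complex.sinh z + Complex.sinh z * Complex.cosh z)) *
        (Complex.cosh z - 1 + (x:ℂ))^2 -
        (Complex.cosh z * (Complex.cosh z - 1 + (x:ℂ)) - Complex.sinh z * Complex.sinh z) *
          ((2:ℂ) * (Complex.cosh z - 1 + (x:ℂ))^1 * Complex.sinh z)) /
        ((Complex.cosh z - 1 + (x:ℂ))^2)^2 := by
    rw [hev.deriv_eq]; exact hF''.deriv
  -- x direction
  have hVopen : IsOpen {y : ℝ | Complex.cosh z - 1 + (y:ℂ) ≠ 0} := by
    have hcont : Continuous fun y : ℝ => Complex.cosh z - 1 + (y:ℂ) := by continuity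
    exact hcont.isOpen_preimage _ isOpen_ne
  have hG1 : ∀ y : ℝ, Complex.cosh z - 1 + (y:ℂ) ≠ 0 →
      HasDerivAt (fun y : ℝ => Complex.sinh z / (Complex.cosh z - 1 + (y:ℂ)))
        (-Complex.sinh z / (Complex.cosh z - 1 + (y:ℂ))^2) y := by
    intro y hy
    have h1 : HasDerivAt (fun t : ℂ => Complex.sinh z / (Complex.cosh z - 1 + t))
        ((0 * (Complex.cosh z - 1 + (y:ℂ)) - Complex.sinh z * 1) /
          (Complex.cosh z - 1 + (y:ℂ))^2) (y:ℂ) :=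
      (hasDerivAt_const _ _).div ((hasDerivAt_id ((y:ℂ))).const_add (Complex.cosh z - 1)) hy
    have h2 := h1.comp_ofReal
    convert h2 using 1
    ring
  have hGev : deriv (fun y : ℝ => Complex.sinh z / (Complex.cosh z - 1 + (y:ℂ))) =ᶠ[nhds x]
      (fun y : ℝ => -Complex.sinh z / (Complex.cosh z - 1 + (y:ℂ))^2) := by
    filter_upwards [hVopen.mem_nhds hden] with y hy using (hG1 y hy).deriv
  have hG1x : deriv (fun y : ℝ => Complex.sinh z / (Complex.cosh z - 1 + (y:ℂ))) x =
      -Complex.sinh z / (Complex.cosh z - 1 + (x:ℂ))^2 := (hG1 x hden).deriv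
  have hG2 : HasDerivAt (fun y : ℝ => -Complex.sinh z / (Complex.cosh z - 1 + (y:ℂ))^2)
      (2 * Complex.sinh z * (Complex.cosh z - 1 + (x:ℂ)) /
        ((Complex.cosh z - 1 + (x:ℂ))^2)^2) x := by
    have h1 : HasDerivAt (fun t : ℂ => -Complex.sinh z / (Complex.cosh z - 1 + t)^2)
        ((0 * (Complex.cosh z - 1 + (x:ℂ))^2 - -Complex.sinh z *
          ((2:ℂ) * (Complex.cosh z - 1 + (x:ℂ))^1 * 1)) /
          ((Complex.cosh z - 1 + (x:ℂ))^2)^2) ((x:ℂ)) :=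
      (hasDerivAt_const _ _).div
        ((((hasDerivAt_id ((x:ℂ))).const_add (Complex.cosh z - 1)).pow 2))
        (pow_ne_zero 2 hden)
    have h2 := h1.comp_ofReal
    convert h2 using 1
    ring
  have hG2x : deriv (deriv (fun y : ℝ => Complex.sinh z / (Complex.cosh z - 1 + (y:ℂ)))) x =
      2 * Complex.sinh z * (Complex.cosh z - 1 + (x:ℂ)) /
        ((Complex.cosh z - 1 + (x:ℂ))^2)^2 := by
    rw [hGev.deriv_eq]; exact hG2.deriv
  rw [hLHS, hG1x, hG2x]
  have hid : Complex.cosh z ^ 2 - Complex.sinh z ^ 2 = 1 := Complex.cosh_sq_sub_sinh_sq z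
  have hs2 : Complex.sinh z * Complex.sinh z = Complex.cosh z ^ 2 - 1 := by
    linear_combination -hid
  rw [hs2]
  field_simp
  ring
end

section
/- Let p ≥ 1, let λ₁,…,λ_p be distinct complex numbers, let A be the p×p companion matrix with characteristic polynomial ∏_j (z - λ_j), and let φ₀,…,φ_p be the coefficients defined by ∏_{j=1}^p (1 - e^{Δλ_j} z) = -∑_{j=0}^p φ_j z^j. Then ∑_{j=0}^p φ_j · e^{-A j Δ} = 0 (the zero matrix). -/
/-!
Put `B = exp (-ΔA)`, so that `exp (-jΔA) = Bʲ` and the sum is `-q(B)` for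
`q(z) = ∏ⱼ (1 - e^{Δλⱼ} z)`. Each factor `1 - e^{Δλⱼ} B = 1 - exp (Δ(λⱼ - A))` is
`Δ(A - λⱼ)` times the power series `(eᵘ - 1)/u` evaluated at `u = Δ(λⱼ - A)`. These series
commute with every polynomial in `A`, so `q(B)` is a multiple of `∏ⱼ (A - λⱼ) = χ_A(A) = 0`.
-/

open Matrix Polynomial

open NormedSpace

theorem List.prod_map_mul_of_commute {ι M : Type*} [Monoid M] (l : List ι) (u v : ι → M)
    (h : ∀ i ∈ l, ∀ j ∈ l, Commute (v i) (u j)) :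
    (l.map fun i => u i * v i).prod = (l.map u).prod * (l.map v).prod := by
  induction l with
  | nil => simp
  | cons a t ih =>
    have hv : Commute (v a) (t.map u).prod :=
      Commute.list_prod_right _ _ fun _ hx => by
        obtain ⟨j, hj, rfl⟩ := List.mem_map.mp hx
        exact h a List.mem_cons_self j (List.mem_cons_of_mem _ hj)
    simp only [List.map_cons, List.prod_cons]
    rw [ih fun i hi j hj => h i (List.mem_cons_of_mem _ hi) j (List.mem_cons_of_mem _ hj),
      mul_assoc, ← mul_assoc (v a), hv.eq]
    simp only [mul_assoc]

section ExpSubOneDiv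

variable {𝕂 𝔸 : Type*} [RCLike 𝕂] [NormedRing 𝔸] [NormedAlgebra 𝕂 𝔸]

variable (𝕂) in
noncomputable def expSubOneDiv (x : 𝔸) : 𝔸 := ∑' n : ℕ, ((n + 1).factorial : 𝕂)⁻¹ • x ^ n

theorem Commute.expSubOneDiv_right {x y : 𝔸} (h : Commute y x) :
    Commute y (expSubOneDiv 𝕂 x) :=
  .tsum_right y fun n => (h.pow_right n).smul_right _

variable [CompleteSpace 𝔸]

theorem summable_expSubOneDiv_series (x : 𝔸) :
    Summable fun n : ℕ => ((n + 1).factorial : 𝕂)⁻¹ • x ^ n := by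
  refine .of_norm_bounded (norm_expSeries_summable' (𝕂 := 𝕂) x) fun n => ?_
  rw [norm_smul, norm_smul, norm_inv, norm_inv, RCLike.norm_natCast, RCLike.norm_natCast]
  gcongr
  exact n.le_succ

theorem exp_sub_one_eq_mul_expSubOneDiv (x : 𝔸) : exp x - 1 = x * expSubOneDiv 𝕂 x := by
  rw [congr_fun (exp_eq_tsum 𝕂) x, (expSeries_summable' x).tsum_eq_zero_add, expSubOneDiv,
    ← (summable_expSubOneDiv_series x).tsum_mul_left]
  simp only [Nat.factorial_zero, Nat.cast_one, inv_one, pow_zero, one_smul, add_sub_cancel_left]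
  exact tsum_congr fun n => by rw [mul_smul_comm, pow_succ']

theorem List.prod_map_one_sub_exp_aeval_eq_zero {ι : Type*} (x : 𝔸) (l : List ι) (q : ι → 𝕂[X])
    (h : aeval x (l.map q).prod = 0) :
    (l.map fun i => 1 - exp (aeval x (q i))).prod = 0 := by
  have hfactor : ∀ i, 1 - exp (aeval x (q i)) =
      aeval x (q i) * -expSubOneDiv 𝕂 (aeval x (q i)) := fun i => by
    rw [mul_neg, ← exp_sub_one_eq_mul_expSubOneDiv, neg_sub]
  have hprod : (l.map fun i => aeval x (q i)).prod = 0 := by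
    rwa [map_list_prod, List.map_map] at h
  simp only [hfactor]
  rw [List.prod_map_mul_of_commute, hprod, zero_mul]
  exact fun i _ j _ =>
    (Commute.expSubOneDiv_right ((Commute.all (q j) (q i)).map (aeval x))).symm.neg_left

theorem aeval_exp_neg_smul_prod_one_sub_C_exp_mul_X {ι : Type*} (s : Finset ι) (x : 𝔸) (t : 𝕂)
    (μ : ι → 𝕂) (hx : aeval x (∏ i ∈ s, (X - C (μ i))) = 0) :
    aeval (exp (-(t • x))) (∏ i ∈ s, (1 - C (exp (t * μ i)) * X)) = 0 := by
  let +nondep : NormedAlgebra ℚ 𝔸 := .restrictScalars ℚ 𝕂 𝔸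
  have hfactor : ∀ i, aeval (exp (-(t • x))) (1 - C (exp (t * μ i)) * X) =
      1 - exp (aeval x (C t * (C (μ i) - X))) := fun i => by
    have hshift : aeval x (C t * (C (μ i) - X)) = algebraMap 𝕂 𝔸 (t * μ i) + -(t • x) := by
      simp [Algebra.smul_def, mul_add, sub_eq_add_neg]
    rw [hshift, NormedSpace.exp_add_of_commute (Algebra.commutes _ _), ← algebraMap_exp_comm]
    simp [Algebra.smul_def]
  have hvanish : aeval x ((s.toList.map fun i => C t * (C (μ i) - X)).prod) = 0 := by
    obtain ⟨r, hr⟩ : ∏ i ∈ s, (X - C (μ i)) ∣ ∏ i ∈ s, C t * (C (μ i) - X) :=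
      Finset.prod_dvd_prod_of_dvd _ _ fun i _ => ⟨-C t, by ring⟩
    rw [Finset.prod_map_toList, hr, map_mul, hx, zero_mul]
  rw [← Finset.prod_map_toList, map_list_prod, List.map_map]
  simpa only [Function.comp_def, hfactor] using
    List.prod_map_one_sub_exp_aeval_eq_zero x s.toList _ hvanish

end ExpSubOneDiv

theorem cayley_hamilton_sampled_AR_general (p : ℕ) (Δ : ℝ)
    (lam : Fin p → ℂ)
    (A : Matrix (Fin p) (Fin p) ℂ)
    (hA : A.charpoly = ∏ j : Fin p, (Polynomial.X - Polynomial.C (lam j)))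
    (φ : ℕ → ℂ)
    (hφ : ∀ z : ℂ, ∏ j : Fin p, (1 - Complex.exp ((Δ : ℂ) * lam j) * z) =
        -∑ j ∈ Finset.range (p + 1), φ j * z ^ j) :
    ∑ j ∈ Finset.range (p + 1), φ j • NormedSpace.exp ((-(j : ℂ) * (Δ : ℂ)) • A) = 0 := by
  set B := exp (-((Δ : ℂ) • A))
  have hpow (j : ℕ) : exp ((-(j : ℂ) * (Δ : ℂ)) • A) = B ^ j := by
    rw [← Matrix.exp_nsmul, ← Nat.cast_smul_eq_nsmul ℂ, smul_neg, smul_smul, neg_mul, neg_smul]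
  have hpoly : ∏ j, (1 - C (Complex.exp (Δ * lam j)) * X) =
      -∑ j ∈ Finset.range (p + 1), C (φ j) * X ^ j :=
    Polynomial.funext fun z => by simpa [eval_prod, eval_finsetSum] using hφ z
  have hvanish : aeval B (∏ j, (1 - C (Complex.exp (Δ * lam j)) * X)) = 0 := by
    rw [Complex.exp_eq_exp_ℂ]
    -- any norm inducing the entrywise topology works; this one makes matrices a Banach algebra
    open scoped Norms.Operator in
    exact aeval_exp_neg_smul_prod_one_sub_C_exp_mul_X _ A _ lam (hA ▸ aeval_self_charpoly A)
  rw [hpoly, map_neg, neg_eq_zero, map_sum] at hvanish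
  simp_rw [hpow, Algebra.smul_def]
  simpa only [map_mul, map_pow, aeval_C, aeval_X] using hvanish

theorem cayley_hamilton_sampled_AR (p : ℕ) (hp : 1 ≤ p) (Δ : ℝ) (hΔ : 0 < Δ)
    (lam : Fin p → ℂ) (hdist : Function.Injective lam)
    (A : Matrix (Fin p) (Fin p) ℂ)
    (hA : A.charpoly = ∏ j : Fin p, (Polynomial.X - Polynomial.C (lam j)))
    (φ : ℕ → ℂ)
    (hφ : ∀ z : ℂ, ∏ j : Fin p, (1 - Complex.exp ((Δ : ℂ) * lam j) * z) =
        -∑ j ∈ Finset.range (p + 1), φ j * z ^ j) :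
    ∑ j ∈ Finset.range (p + 1), φ j • NormedSpace.exp ((-(j : ℂ) * (Δ : ℂ)) • A) = 0 :=
  cayley_hamilton_sampled_AR_general p Δ lam A hA φ hφ
end

section
/- For h ∈ (0,1), define χ_{2,1}(h) = (h-1)/h. Then |χ_{2,1}(h)| < 1 if and only if h > 1/2; and the system (1 + η²) · s = h²(1 + χ_{2,1}(h)²) · c, η · s = -h² χ_{2,1}(h) · c with η = 2 - √3, s = (2+√3)/6, c = 1 has exactly the solutions h = (3 ± √3)/6; moreover |χ_{2,1}((3+√3)/6)| < 1 while |χ_{2,1}((3-√3)/6)| > 1. -/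
theorem riemann_rule_p_minus_q_two :
    let χ : ℝ → ℝ := fun h => (h - 1) / h
    let η : ℝ := 2 - Real.sqrt 3
    let s : ℝ := (2 + Real.sqrt 3) / 6
    let c : ℝ := 1
    (∀ h ∈ Set.Ioo (0:ℝ) 1, |χ h| < 1 ↔ 1 / 2 < h) ∧
    (∀ h ∈ Set.Ioo (0:ℝ) 1,
      ((1 + η ^ 2) * s = h ^ 2 * (1 + χ h ^ 2) * c ∧ η * s = -(h ^ 2) * χ h * c) ↔
        (h = (3 + Real.sqrt 3) / 6 ∨ h = (3 - Real.sqrt 3) / 6)) ∧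
    |χ ((3 + Real.sqrt 3) / 6)| < 1 ∧ 1 < |χ ((3 - Real.sqrt 3) / 6)| := by
  intro χ η s c
  have hr2 : Real.sqrt 3 ^ 2 = 3 := Real.sq_sqrt (by norm_num)
  have hr1 : (1:ℝ) < Real.sqrt 3 := by nlinarith [Real.sqrt_nonneg 3, hr2]
  have hr2' : Real.sqrt 3 < 2 := by nlinarith [Real.sqrt_nonneg 3, hr2]
  set r := Real.sqrt 3 with hrdef
  have hηs : η * s = 1 / 6 := by
    show (2 - r) * ((2 + r) / 6) = 1 / 6
    linear_combination (-(1:ℝ)/6) * hr2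
  have h1s : (1 + η ^ 2) * s = 2 / 3 := by
    show (1 + (2 - r) ^ 2) * ((2 + r) / 6) = 2 / 3
    linear_combination ((r - 2)/6) * hr2
  refine ⟨?_, ?_, ?_, ?_⟩
  · intro h ⟨h0, h1⟩
    have hχ : χ h = (h - 1) / h := rfl
    rw [hχ, abs_div, abs_of_pos h0, abs_of_neg (by linarith : h - 1 < 0),
      div_lt_one h0]
    constructor <;> intro <;> linarith
  · intro h ⟨h0, h1⟩
    have hne : h ≠ 0 := ne_of_gt h0
    have hχ : χ h = (h - 1) / h := rfl
    have e2' : -(h ^ 2) * χ h * c = -(h * (h - 1)) := by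
      rw [hχ]; show -(h^2) * ((h-1)/h) * 1 = -(h * (h-1)); field_simp
    have e1' : h ^ 2 * (1 + χ h ^ 2) * c = h ^ 2 + (h - 1) ^ 2 := by
      rw [hχ]; show h^2 * (1 + ((h-1)/h)^2) * 1 = h^2 + (h-1)^2; field_simp
    rw [e1', e2', hηs, h1s]
    constructor
    · rintro ⟨-, e2⟩
      have key : (h - (3 + r) / 6) * (h - (3 - r) / 6) = 0 := by
        linear_combination e2 + (-(1:ℝ)/36) * hr2
      rcases mul_eq_zero.mp key with hk | hk
      · left; linarith
      · right; linarith
    · rintro (rfl | rfl) <;>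
      exact ⟨by linear_combination (-(1:ℝ)/18) * hr2, by linear_combination ((1:ℝ)/36) * hr2⟩
  · have h0 : (0:ℝ) < (3 + r) / 6 := by linarith
    have : χ ((3 + r) / 6) = ((3 + r) / 6 - 1) / ((3 + r) / 6) := rfl
    rw [this, abs_div, abs_of_pos h0, abs_of_neg (by nlinarith : (3 + r) / 6 - 1 < 0),
      div_lt_one h0]
    nlinarith
  · have h0 : (0:ℝ) < (3 - r) / 6 := by linarith
    have : χ ((3 - r) / 6) = ((3 - r) / 6 - 1) / ((3 - r) / 6) := rfl
    rw [this, abs_div, abs_of_pos h0, abs_of_neg (by nlinarith : (3 - r) / 6 - 1 < 0),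
      lt_div_iff₀ h0]
    nlinarith
end

section
/- For h ∈ (0,1) define χ_{3,j}(h) = 2(h-1)² / (2(h-1)h - 1 - (-1)^j·√(1 - 4(h-1)h)) for j = 1,2 (note 1 - 4(h-1)h > 0 for all h ∈ (0,1)). Then for every h ∈ (0,1): |χ_{3,1}(h)| > 1 and 0 < |χ_{3,2}(h)| < 1. -/
theorem riemann_rule_p_minus_q_three :
    ∀ h ∈ Set.Ioo (0:ℝ) 1,
      0 < 1 - 4 * (h - 1) * h ∧
      1 < |2 * (h - 1) ^ 2 /
            (2 * (h - 1) * h - 1 - (-1 : ℝ) ^ (1:ℕ) * Real.sqrt (1 - 4 * (h - 1) * h))| ∧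
      0 < |2 * (h - 1) ^ 2 /
            (2 * (h - 1) * h - 1 - (-1 : ℝ) ^ (2:ℕ) * Real.sqrt (1 - 4 * (h - 1) * h))| ∧
      |2 * (h - 1) ^ 2 /
            (2 * (h - 1) * h - 1 - (-1 : ℝ) ^ (2:ℕ) * Real.sqrt (1 - 4 * (h - 1) * h))| < 1 := by
  rintro h ⟨h0, h1⟩
  have hD : 0 < 1 - 4 * (h - 1) * h := by nlinarith
  set s := Real.sqrt (1 - 4 * (h - 1) * h) with hs
  have hs0 : 0 < s := Real.sqrt_pos.mpr hD
  have hs2 : s ^ 2 = 1 - 4 * (h - 1) * h := Real.sq_sqrt hD.le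
  have hnum : 0 < 2 * (h - 1) ^ 2 := by nlinarith
  -- s < 1 + 2h - 2h²
  have hslt : s < 1 + 2 * h - 2 * h ^ 2 := by
    nlinarith [sq_nonneg (h * (1 - h)), mul_pos hs0 hs0, sq_nonneg (s - (1 + 2 * h - 2 * h ^ 2)),
      mul_pos (mul_pos h0 h0) (mul_pos (by linarith : (0:ℝ) < 1 - h) (by linarith : (0:ℝ) < 1 - h))]
  -- s > |4h² - 6h + 1|
  have hkey : (4 * h ^ 2 - 6 * h + 1) ^ 2 < s ^ 2 := by
    nlinarith [mul_pos h0 (mul_pos (mul_pos (by linarith : (0:ℝ) < 1 - h)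
      (by linarith : (0:ℝ) < 1 - h)) (by linarith : (0:ℝ) < 1 - h))]
  have hk1 : 4 * h ^ 2 - 6 * h + 1 < s := by nlinarith [sq_nonneg (s + (4 * h ^ 2 - 6 * h + 1))]
  have hk2 : -(4 * h ^ 2 - 6 * h + 1) < s := by nlinarith [sq_nonneg (s - (4 * h ^ 2 - 6 * h + 1))]
  have hd1 : 2 * (h - 1) * h - 1 - (-1 : ℝ) ^ (1:ℕ) * s < 0 := by
    simp only [pow_one]; nlinarith
  have hd2 : 2 * (h - 1) * h - 1 - (-1 : ℝ) ^ (2:ℕ) * s < 0 := by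
    norm_num; nlinarith
  refine ⟨hD, ?_, ?_, ?_⟩
  · rw [abs_of_neg (div_neg_of_pos_of_neg hnum hd1), ← div_neg,
      lt_div_iff₀ (by linarith)]
    simp only [pow_one] at *
    nlinarith
  · rw [abs_pos]
    exact div_ne_zero (by positivity) (ne_of_lt hd2)
  · rw [abs_of_neg (div_neg_of_pos_of_neg hnum hd2), ← div_neg,
      div_lt_one (by linarith)]
    norm_num at *
    nlinarith
end
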